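/- arXiv:2410.21869 — 5 statements merged into one kernel-verified Lean document; each statement's English description precedes it below -/
import Mathlib

section
/- (Theorem 1, case C1.) Under the cluster-centric DGP, suppose the triple (f, W, β) globally minimizes the DIET instance-discrimination objective L(f, W, β) among all continuous encoders f: R^D → R^d whose embeddings f(x) are unit-normalized (f takes values in S^{d-1} on the data), all classification heads W whose rows w_i are unit-normalized, and all temperatures β > 0. Then: (a) h = f ∘ g is the restriction to S^{d-1} of an orthogonal linear map of R^d; (b) w_i = h(v_{𝒞(i)}) for every instance label i ∈ I, i.e., the weight vectors identify the cluster vectors up to the same orthogonal linear transformation; (c) β = κ; and (d) for any i, j ∈ I with 𝒞(i) = 𝒞(j) one has w_i = w_j. -/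
/-!
The competitor `f₀ ∘ g = id`, `w' = v ∘ 𝒞`, `β' = κ` (with `f₀` from Tietze's extension theorem)
has logits `κ ⟪v (𝒞 i), z⟫`, which by rotation invariance of the von Mises–Fisher normalizer are
the true log-posterior of the label up to a shift depending on `z`. By Gibbs' inequality the
objective of any other triple exceeds the competitor's by the integral of a continuous
nonnegative Kullback–Leibler defect, so at a minimizer the defect vanishes on the whole sphere:
`β ⟪w i, f (g z)⟫ = κ ⟪v (𝒞 i), z⟫ + c z`. As the `v c` generate `ℝ^d` affinely, this yields a
linear `T` with `⟪T y, f (g z)⟫ = ⟪y, z⟫` up to scaling; its transpose inverts `f ∘ g`, which is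
therefore linear and, having unit norm on the sphere, orthogonal. Finally `‖w i‖ = 1` for every
`i` forces `c = 0` and `β = κ`.
-/

open MeasureTheory Metric
open scoped RealInnerProductSpace BigOperators

/-- The uniform (surface) measure on the unit sphere of `ℝ^d`, obtained from the
Lebesgue measure on `EuclideanSpace ℝ (Fin d)`. -/
noncomputable def sphereUniform (d : ℕ) :
    Measure (Metric.sphere (0 : EuclideanSpace ℝ (Fin d)) 1) :=
  (volume : Measure (EuclideanSpace ℝ (Fin d))).toSphere

/-- A finite system of vectors is an *affine generator system* of `ℝ^d` if every vector
is a linear combination of the system with coefficients summing to `1`. -/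
def IsAffineGenerator {d : ℕ} {ι : Type} [Fintype ι]
    (v : ι → EuclideanSpace ℝ (Fin d)) : Prop :=
  ∀ x : EuclideanSpace ℝ (Fin d), ∃ α : ι → ℝ,
    (∑ c, α c = 1) ∧ x = ∑ c, α c • v c

/-- The DIET instance-discrimination objective
`L(f, W, β) = E_{(x,I)}[ −ln( exp(β⟨w_I, f(x)⟩) / Σ_j exp(β⟨w_j, f(x)⟩) ) ]`,
where the instance label is uniform on `Idx` and, conditionally on the label `i`, the
latent `z` is distributed on the unit sphere according to the von Mises–Fisher density
proportional to `exp (κ ⟪v (Cl i), z⟫)` with respect to the uniform (surface) measure,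
and `x = g z`. -/
noncomputable def dietLoss (d D : ℕ) {Cset Idx : Type} [Fintype Idx]
    (v : Cset → EuclideanSpace ℝ (Fin d)) (κ : ℝ) (Cl : Idx → Cset)
    (g : Metric.sphere (0 : EuclideanSpace ℝ (Fin d)) 1 → EuclideanSpace ℝ (Fin D))
    (f : EuclideanSpace ℝ (Fin D) → EuclideanSpace ℝ (Fin d))
    (w : Idx → EuclideanSpace ℝ (Fin d)) (β : ℝ) : ℝ :=
  (Fintype.card Idx : ℝ)⁻¹ * ∑ i : Idx,
    ((∫ z : Metric.sphere (0 : EuclideanSpace ℝ (Fin d)) 1,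
        Real.exp (κ * ⟪v (Cl i), (z : EuclideanSpace ℝ (Fin d))⟫)
        ∂(sphereUniform d))⁻¹ *
      ∫ z : Metric.sphere (0 : EuclideanSpace ℝ (Fin d)) 1,
        Real.exp (κ * ⟪v (Cl i), (z : EuclideanSpace ℝ (Fin d))⟫) *
          (- Real.log (Real.exp (β * ⟪w i, f (g z)⟫) /
            ∑ j : Idx, Real.exp (β * ⟪w j, f (g z)⟫)))
        ∂(sphereUniform d))

open Real InformationTheory

section Softmax

variable {ι : Type*} [Fintype ι]

noncomputable def softmax (s : ι → ℝ) (i : ι) : ℝ := exp (s i) / ∑ j, exp (s j)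

lemma sum_exp_pos (s : ι → ℝ) (i : ι) : 0 < ∑ j, exp (s j) :=
  Finset.sum_pos (fun j _ => exp_pos (s j)) ⟨i, Finset.mem_univ i⟩

lemma softmax_pos (s : ι → ℝ) (i : ι) : 0 < softmax s i :=
  div_pos (exp_pos _) (sum_exp_pos s i)

lemma sum_softmax [Nonempty ι] (s : ι → ℝ) : ∑ i, softmax s i = 1 := by
  obtain ⟨i⟩ := ‹Nonempty ι›
  rw [← div_self (sum_exp_pos s i).ne', Finset.sum_div]
  rfl

lemma log_softmax (s : ι → ℝ) (i : ι) : log (softmax s i) = s i - log (∑ j, exp (s j)) := by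
  rw [softmax, log_div (exp_pos _).ne' (sum_exp_pos s i).ne', log_exp]

lemma continuous_log_softmax (i : ι) : Continuous fun s : ι → ℝ => log (softmax s i) := by
  simp only [log_softmax]
  exact (continuous_apply i).sub
    ((continuous_finsetSum _ fun j _ => (continuous_apply j).rexp).log
      fun s => (sum_exp_pos s i).ne')

lemma exists_add_const_of_softmax_eq {r s : ι → ℝ} (h : softmax r = softmax s) :
    ∃ c, ∀ i, s i = r i + c :=
  ⟨log (∑ j, exp (s j)) - log (∑ j, exp (r j)), fun i => by
    have := congrArg log (congrFun h i)
    rw [log_softmax, log_softmax] at this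
    linarith⟩

noncomputable def expCrossEntropy (r s : ι → ℝ) : ℝ := ∑ i, exp (r i) * -log (softmax s i)

lemma continuous_expCrossEntropy :
    Continuous fun p : (ι → ℝ) × (ι → ℝ) => expCrossEntropy p.1 p.2 :=
  continuous_finsetSum _ fun i _ =>
    ((continuous_apply i).comp continuous_fst).rexp.mul
      ((continuous_log_softmax i).comp continuous_snd).neg

/-- Gibbs' inequality in exact form. -/
lemma expCrossEntropy_sub_self (r s : ι → ℝ) :
    expCrossEntropy r s - expCrossEntropy r r =
      (∑ j, exp (r j)) * ∑ i, softmax s i * klFun (softmax r i / softmax s i) := by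
  rcases isEmpty_or_nonempty ι with hι | hι
  · simp [expCrossEntropy]
  have hterm : ∀ i, softmax s i * klFun (softmax r i / softmax s i) =
      softmax r i * (log (softmax r i) - log (softmax s i)) - (softmax r i - softmax s i) :=
    fun i => by
      have hs := (softmax_pos s i).ne'
      rw [klFun, log_div (softmax_pos r i).ne' hs]
      field_simp
      ring
  have hexp : ∀ i, exp (r i) = (∑ j, exp (r j)) * softmax r i := fun i => by
    rw [softmax, mul_div_cancel₀ _ (sum_exp_pos r i).ne']
  calc expCrossEntropy r s - expCrossEntropy r r
      = ∑ i, exp (r i) * (log (softmax r i) - log (softmax s i)) := by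
        simp only [expCrossEntropy, ← Finset.sum_sub_distrib]
        exact Finset.sum_congr rfl fun i _ => by ring
    _ = (∑ j, exp (r j)) * ∑ i, softmax r i * (log (softmax r i) - log (softmax s i)) := by
        rw [Finset.mul_sum]
        exact Finset.sum_congr rfl fun i _ => by rw [hexp, mul_assoc]
    _ = (∑ j, exp (r j)) * ∑ i, (softmax r i * (log (softmax r i) - log (softmax s i)) -
          (softmax r i - softmax s i)) := by
        rw [Finset.sum_sub_distrib, Finset.sum_sub_distrib, sum_softmax, sum_softmax, sub_self,
          sub_zero]
    _ = _ := by simp only [hterm]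

lemma expCrossEntropy_self_le (r s : ι → ℝ) : expCrossEntropy r r ≤ expCrossEntropy r s := by
  rcases isEmpty_or_nonempty ι with hι | ⟨⟨i⟩⟩
  · simp [expCrossEntropy]
  rw [← sub_nonneg, expCrossEntropy_sub_self]
  exact mul_nonneg (sum_exp_pos r i).le <| Finset.sum_nonneg fun j _ =>
    mul_nonneg (softmax_pos s j).le
      (klFun_nonneg (div_pos (softmax_pos r j) (softmax_pos s j)).le)

lemma softmax_eq_of_expCrossEntropy_eq {r s : ι → ℝ}
    (h : expCrossEntropy r s = expCrossEntropy r r) : softmax r = softmax s := by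
  funext i
  have hsum := expCrossEntropy_sub_self r s
  rw [h, sub_self, zero_eq_mul] at hsum
  have hkl := (Finset.sum_eq_zero_iff_of_nonneg fun j _ =>
    mul_nonneg (softmax_pos s j).le
      (klFun_nonneg (div_pos (softmax_pos r j) (softmax_pos s j)).le)).mp
    (hsum.resolve_left (sum_exp_pos r i).ne') i (Finset.mem_univ i)
  rw [mul_eq_zero, klFun_eq_zero_iff (div_pos (softmax_pos r i) (softmax_pos s i)).le,
    div_eq_one_iff_eq (softmax_pos s i).ne'] at hkl
  exact hkl.resolve_left (softmax_pos s i).ne'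

end Softmax

lemma softmax_eq_of_integral_expCrossEntropy_le {ι : Type*} [Fintype ι] {X : Type*}
    [TopologicalSpace X] [CompactSpace X] [MeasurableSpace X] [OpensMeasurableSpace X]
    {μ : Measure X} [IsFiniteMeasure μ] [μ.IsOpenPosMeasure] {r s : X → ι → ℝ}
    (hr : Continuous r) (hs : Continuous s)
    (h : ∫ x, expCrossEntropy (r x) (s x) ∂μ ≤ ∫ x, expCrossEntropy (r x) (r x) ∂μ) (x : X) :
    softmax (r x) = softmax (s x) := by
  have hcont : ∀ {p q : X → ι → ℝ}, Continuous p → Continuous q →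
      Continuous fun x => expCrossEntropy (p x) (q x) := fun hp hq =>
    continuous_expCrossEntropy.comp (hp.prodMk hq)
  refine softmax_eq_of_expCrossEntropy_eq (sub_eq_zero.1 ?_)
  by_contra hx
  have hpos := ((hcont hr hs).sub (hcont hr hr)).integral_pos_of_hasCompactSupport_nonneg_nonzero
    (μ := μ) (.of_compactSpace _) (fun x => sub_nonneg.2 (expCrossEntropy_self_le _ _)) hx
  rw [Pi.sub_def, integral_sub ((hcont hr hs).integrable_of_hasCompactSupport (.of_compactSpace _))
    ((hcont hr hr).integrable_of_hasCompactSupport (.of_compactSpace _))] at hpos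
  linarith

section SphereMeasure

open Set
open scoped Pointwise

noncomputable def LinearIsometryEquiv.sphereHomeomorph {E : Type*} [NormedAddCommGroup E]
    [NormedSpace ℝ E] (O : E ≃ₗᵢ[ℝ] E) : sphere (0 : E) 1 ≃ₜ sphere (0 : E) 1 :=
  O.toHomeomorph.subtype fun x => by simp

lemma LinearIsometryEquiv.measurePreserving_sphereHomeomorph {E : Type*}
    [NormedAddCommGroup E] [NormedSpace ℝ E] [MeasurableSpace E] [BorelSpace E]
    {μ : Measure E} (O : E ≃ₗᵢ[ℝ] E) (hO : MeasurePreserving O μ μ) :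
    MeasurePreserving O.sphereHomeomorph μ.toSphere μ.toSphere := by
  have hmeas := O.sphereHomeomorph.continuous.measurable
  refine ⟨hmeas, Measure.ext fun s hs => ?_⟩
  have hcone : Ioo (0 : ℝ) 1 • (Subtype.val '' (O.sphereHomeomorph ⁻¹' s)) =
      O ⁻¹' (Ioo (0 : ℝ) 1 • (Subtype.val '' s)) := by
    have hval : Subtype.val '' (O.sphereHomeomorph ⁻¹' s) = O.symm '' (Subtype.val '' s) := by
      rw [← Homeomorph.image_symm, image_image, image_image]
      rfl
    rw [hval, ← image2_smul, ← image_image2_distrib_right fun (c : ℝ) x => O.symm.map_smul c x,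
      image2_smul]
    exact congrFun O.toHomeomorph.image_symm _
  rw [Measure.map_apply hmeas hs, Measure.toSphere_apply' _ hs,
    Measure.toSphere_apply' _ (hmeas hs), hcone,
    hO.measure_preimage_emb O.toHomeomorph.measurableEmbedding]

lemma integral_comp_inner_toSphere_eq {E : Type*} [NormedAddCommGroup E] [InnerProductSpace ℝ E]
    [FiniteDimensional ℝ E] [MeasurableSpace E] [BorelSpace E] (F : ℝ → ℝ) {a b : E}
    (hab : ‖a‖ = ‖b‖) :
    ∫ z, F ⟪a, (z : E)⟫ ∂(volume : Measure E).toSphere =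
      ∫ z, F ⟪b, (z : E)⟫ ∂(volume : Measure E).toSphere := by
  have hO := (ℝ ∙ (a - b))ᗮ.reflection.measurePreserving_sphereHomeomorph
    (ℝ ∙ (a - b))ᗮ.reflection.measurePreserving
  rw [← Submodule.reflection_sub hab, ← hO.integral_comp
    (ℝ ∙ (a - b))ᗮ.reflection.sphereHomeomorph.measurableEmbedding]
  simp [LinearIsometryEquiv.sphereHomeomorph, LinearIsometryEquiv.inner_map_eq_flip]

end SphereMeasure

instance (d : ℕ) : IsFiniteMeasure (sphereUniform d) := by
  unfold sphereUniform
  infer_instance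

instance (d : ℕ) : (sphereUniform d).IsOpenPosMeasure := by
  unfold sphereUniform
  infer_instance

section Sphere

variable {E : Type*} [NormedAddCommGroup E] [InnerProductSpace ℝ E]

lemma exists_eq_norm_smul_sphere {x : E} (hx : x ≠ 0) :
    ∃ z : sphere (0 : E) 1, x = ‖x‖ • (z : E) :=
  ⟨⟨‖x‖⁻¹ • x, by simpa using norm_smul_inv_norm (𝕜 := ℝ) hx⟩, by
    rw [smul_smul, mul_inv_cancel₀ (norm_ne_zero_iff.2 hx), one_smul]⟩

lemma eq_zero_of_forall_inner_sphere_eq_zero {a : E}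
    (h : ∀ z : sphere (0 : E) 1, ⟪a, (z : E)⟫ = 0) : a = 0 := by
  by_contra ha
  obtain ⟨z, hz⟩ := exists_eq_norm_smul_sphere ha
  have : ⟪a, ‖a‖ • (z : E)⟫ = 0 := by rw [real_inner_smul_right, h, mul_zero]
  rw [← hz] at this
  exact ha (inner_self_eq_zero.1 this)

/-- `Tᵀ` inverts `u`, so `u` is linear, and it is orthogonal because it preserves the norm on
the sphere. -/
lemma exists_linearIsometryEquiv_of_inner_eq [FiniteDimensional ℝ E] (T : E →ₗ[ℝ] E)
    {u : sphere (0 : E) 1 → E} (hu : ∀ z, ‖u z‖ = 1) (hT : ∀ y z, ⟪T y, u z⟫ = ⟪y, (z : E)⟫) :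
    ∃ O : E ≃ₗᵢ[ℝ] E, ∀ z, u z = O z := by
  have hA : ∀ z, T.adjoint (u z) = z := fun z =>
    ext_inner_left ℝ fun y => by rw [LinearMap.adjoint_inner_right, hT]
  have hsurj : Function.Surjective T.adjoint := by
    intro x
    rcases eq_or_ne x 0 with rfl | hx
    · exact ⟨0, map_zero _⟩
    obtain ⟨z, hz⟩ := exists_eq_norm_smul_sphere hx
    exact ⟨‖x‖ • u z, by rw [map_smul, hA, ← hz]⟩
  set e := LinearEquiv.ofBijective T.adjoint ⟨LinearMap.injective_iff_surjective.2 hsurj, hsurj⟩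
  have hue : ∀ z, u z = e.symm z := fun z => e.eq_symm_apply.2 (hA z)
  have hnorm : ∀ x, ‖e.symm x‖ = ‖x‖ := by
    intro x
    rcases eq_or_ne x 0 with rfl | hx
    · simp
    obtain ⟨z, hz⟩ := exists_eq_norm_smul_sphere hx
    rw [hz, map_smul, norm_smul, norm_smul, ← hue, hu, mem_sphere_zero_iff_norm.1 z.2]
  exact ⟨{ e.symm with norm_map' := hnorm }, hue⟩

section AffineGenerator

variable {d : ℕ} {ι : Type} [Fintype ι] {v : ι → EuclideanSpace ℝ (Fin d)}

lemma IsAffineGenerator.nonempty (hv : IsAffineGenerator v) : Nonempty ι := by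
  obtain ⟨α, hα, -⟩ := hv 0
  by_contra h
  simp [not_nonempty_iff.1 h] at hα

lemma IsAffineGenerator.comp_surjective (hv : IsAffineGenerator v) {ι' : Type} [Fintype ι']
    {Cl : ι' → ι} (hCl : Function.Surjective Cl) : IsAffineGenerator (v ∘ Cl) := by
  classical
  intro x
  obtain ⟨α, hα, rfl⟩ := hv x
  set sec := Function.surjInv hCl
  refine ⟨fun k => ∑ c with sec c = k, α c, (Finset.sum_fiberwise _ sec α).trans hα, ?_⟩
  calc ∑ c, α c • v c = ∑ c, α c • v (Cl (sec c)) := by simp only [sec, Function.surjInv_eq hCl]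
    _ = ∑ k, ∑ c with sec c = k, α c • v (Cl (sec c)) := (Finset.sum_fiberwise _ _ _).symm
    _ = ∑ k, (∑ c with sec c = k, α c) • (v ∘ Cl) k := Finset.sum_congr rfl fun k _ => by
        rw [Finset.sum_smul]
        exact Finset.sum_congr rfl fun c hc => by rw [(Finset.mem_filter.1 hc).2]; rfl

lemma IsAffineGenerator.exists_linearMap_inner_eq (hv : IsAffineGenerator v)
    {F : Type*} [NormedAddCommGroup F] [InnerProductSpace ℝ F] {X : Type*} (a : ι → F)
    (φ : X → EuclideanSpace ℝ (Fin d)) (ψ : X → F) (c : X → ℝ)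
    (h : ∀ i x, ⟪a i, ψ x⟫ = ⟪v i, φ x⟫ + c x) :
    ∃ (T : EuclideanSpace ℝ (Fin d) →ₗ[ℝ] F) (m : F),
      (∀ y x, ⟪T y, ψ x⟫ = ⟪y, φ x⟫) ∧ ∀ x, ⟪m, ψ x⟫ = c x := by
  have hcomb : ∀ (α : ι → ℝ) x,
      ⟪∑ i, α i • a i, ψ x⟫ = ⟪∑ i, α i • v i, φ x⟫ + (∑ i, α i) * c x := by
    intro α x
    simp only [sum_inner, real_inner_smul_left, h, mul_add, Finset.sum_add_distrib,
      Finset.sum_mul]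
  obtain ⟨α₀, hα₀, h0⟩ := hv 0
  have hm : ∀ x, ⟪∑ i, α₀ i • a i, ψ x⟫ = c x := fun x => by
    rw [hcomb, ← h0, inner_zero_left, hα₀, one_mul, zero_add]
  obtain ⟨σ, hσ⟩ := (Fintype.linearCombination ℝ v).exists_rightInverse_of_surjective <|
    LinearMap.range_eq_top.2 fun y => by
      obtain ⟨α, -, hα⟩ := hv y
      exact ⟨α, by rw [Fintype.linearCombination_apply, hα]⟩
  refine ⟨Fintype.linearCombination ℝ a ∘ₗ σ -
    (Fintype.linearCombination ℝ (fun _ => (1 : ℝ)) ∘ₗ σ).smulRight (∑ i, α₀ i • a i),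
    _, fun y x => ?_, hm⟩
  have hy : ∑ i, σ y i • v i = y := by
    simpa [Fintype.linearCombination_apply] using LinearMap.congr_fun hσ y
  simp [Fintype.linearCombination_apply, inner_sub_left, real_inner_smul_left, hcomb, hy, ← h0,
    hα₀]

lemma IsAffineGenerator.eq_zero_of_norm_add_eq (hv : IsAffineGenerator v)
    (hv_norm : ∀ i, ‖v i‖ = 1) {m : EuclideanSpace ℝ (Fin d)} {r : ℝ}
    (h : ∀ i, ‖v i + m‖ = r) : m = 0 := by
  have hγ : ∀ i, ⟪v i, m⟫ = (r ^ 2 - 1 - ‖m‖ ^ 2) / 2 := by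
    intro i
    have := congrArg (· ^ 2) (h i)
    simp only [norm_add_sq_real, hv_norm] at this
    linarith
  have hall : ∀ x, ⟪x, m⟫ = (r ^ 2 - 1 - ‖m‖ ^ 2) / 2 := by
    intro x
    obtain ⟨α, hα, rfl⟩ := hv x
    simp only [sum_inner, real_inner_smul_left, hγ, ← Finset.sum_mul, hα, one_mul]
  have h0 := hall 0
  rw [inner_zero_left] at h0
  exact inner_self_eq_zero.1 ((hall m).trans h0.symm)

lemma IsAffineGenerator.exists_linearIsometryEquiv_of_logit_eq (hv : IsAffineGenerator v)
    (hv_norm : ∀ i, ‖v i‖ = 1) {w : ι → EuclideanSpace ℝ (Fin d)} (hw_norm : ∀ i, ‖w i‖ = 1)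
    {u : sphere (0 : EuclideanSpace ℝ (Fin d)) 1 → EuclideanSpace ℝ (Fin d)} (hu : ∀ z, ‖u z‖ = 1)
    {κ β : ℝ} (hκ : 0 < κ) (hβ : 0 < β)
    {c : sphere (0 : EuclideanSpace ℝ (Fin d)) 1 → ℝ}
    (h : ∀ z i, β * ⟪w i, u z⟫ = κ * ⟪v i, (z : EuclideanSpace ℝ (Fin d))⟫ + c z) :
    ∃ O : EuclideanSpace ℝ (Fin d) ≃ₗᵢ[ℝ] EuclideanSpace ℝ (Fin d),
      (∀ z, u z = O z) ∧ (∀ i, w i = O (v i)) ∧ β = κ := by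
  have h' : ∀ i z, ⟪(β / κ) • w i, u z⟫ = ⟪v i, (z : EuclideanSpace ℝ (Fin d))⟫ + c z / κ := by
    intro i z
    rw [real_inner_smul_left, div_mul_eq_mul_div, h, add_div, mul_div_cancel_left₀ _ hκ.ne']
  obtain ⟨T, m, hT, hm⟩ := hv.exists_linearMap_inner_eq _ _ u _ h'
  obtain ⟨O, hO⟩ := exists_linearIsometryEquiv_of_inner_eq T hu hT
  have hw : ∀ i, O.symm ((β / κ) • w i) = v i + O.symm m := by
    intro i
    rw [← sub_eq_zero]
    refine eq_zero_of_forall_inner_sphere_eq_zero fun z => ?_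
    rw [inner_sub_left, inner_add_left, ← O.inner_map_map, ← O.inner_map_map (O.symm m),
      O.apply_symm_apply, O.apply_symm_apply, ← hO, h', hm]
    ring
  have hm0 : O.symm m = 0 := hv.eq_zero_of_norm_add_eq hv_norm (r := β / κ) fun i => by
    rw [← hw, O.symm.norm_map, norm_smul, hw_norm, mul_one, Real.norm_of_nonneg (by positivity)]
  have hβκ : β / κ = 1 := by
    obtain ⟨i⟩ := hv.nonempty
    have := congrArg norm (hw i)
    rwa [hm0, add_zero, O.symm.norm_map, norm_smul, hw_norm, hv_norm, mul_one,
      Real.norm_of_nonneg (by positivity)] at this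
  refine ⟨O, hO, fun i => ?_, (div_eq_one_iff_eq hκ.ne').1 hβκ⟩
  have := hw i
  rwa [hm0, add_zero, hβκ, one_smul, O.symm_apply_eq] at this

end AffineGenerator

section DIET

variable {d D : ℕ} {Cset Idx : Type} [Fintype Idx]

/-- Rotation invariance of the sphere measure makes the von Mises–Fisher normalizer independent
of the class. -/
lemma exists_dietLoss_eq_integral [Nonempty Idx] (v : Cset → EuclideanSpace ℝ (Fin d))
    (hv_norm : ∀ c, ‖v c‖ = 1) (κ : ℝ) (Cl : Idx → Cset)
    (g : sphere (0 : EuclideanSpace ℝ (Fin d)) 1 → EuclideanSpace ℝ (Fin D)) :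
    ∃ C : ℝ, 0 < C ∧ ∀ (f : EuclideanSpace ℝ (Fin D) → EuclideanSpace ℝ (Fin d))
      (w : Idx → EuclideanSpace ℝ (Fin d)) (β : ℝ), Continuous (fun z => f (g z)) →
      dietLoss d D v κ Cl g f w β = C * ∫ z, expCrossEntropy
        (fun i => κ * ⟪v (Cl i), (z : EuclideanSpace ℝ (Fin d))⟫)
        (fun i => β * ⟪w i, f (g z)⟫) ∂sphereUniform d := by
  obtain ⟨i₀⟩ := ‹Nonempty Idx›
  have hZ : ∀ i, ∫ z, exp (κ * ⟪v (Cl i), (z : EuclideanSpace ℝ (Fin d))⟫) ∂sphereUniform d =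
      ∫ z, exp (κ * ⟪v (Cl i₀), (z : EuclideanSpace ℝ (Fin d))⟫) ∂sphereUniform d := fun i =>
    integral_comp_inner_toSphere_eq (fun t => exp (κ * t)) (by rw [hv_norm, hv_norm])
  have : Nontrivial (EuclideanSpace ℝ (Fin d)) :=
    nontrivial_of_ne (v (Cl i₀)) 0 (norm_ne_zero_iff.1 (by rw [hv_norm]; exact one_ne_zero))
  have : NeZero (sphereUniform d) := ⟨Measure.toSphere_ne_zero _⟩
  have hint : ∀ {F : sphere (0 : EuclideanSpace ℝ (Fin d)) 1 → ℝ}, Continuous F →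
      Integrable F (sphereUniform d) := fun hF =>
    hF.integrable_of_hasCompactSupport (.of_compactSpace _)
  have hZpos := integral_exp_pos (μ := sphereUniform d) (hint (by fun_prop :
    Continuous fun z : sphere (0 : EuclideanSpace ℝ (Fin d)) 1 =>
      exp (κ * ⟪v (Cl i₀), (z : EuclideanSpace ℝ (Fin d))⟫)))
  refine ⟨((Fintype.card Idx : ℝ) * _)⁻¹, inv_pos.2 (mul_pos (by exact_mod_cast
    Fintype.card_pos) hZpos), fun f w β hu => ?_⟩
  have hterm : ∀ i, Continuous fun z : sphere (0 : EuclideanSpace ℝ (Fin d)) 1 =>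
      exp (κ * ⟪v (Cl i), (z : EuclideanSpace ℝ (Fin d))⟫) *
        -log (softmax (fun j => β * ⟪w j, f (g z)⟫) i) := fun i =>
    (continuous_const.mul (continuous_const.inner continuous_subtype_val)).rexp.mul
      ((continuous_log_softmax i).comp
        (continuous_pi fun j => continuous_const.mul (continuous_const.inner hu))).neg
  simp only [expCrossEntropy]
  rw [integral_finsetSum _ fun i _ => hint (hterm i)]
  simp only [dietLoss, hZ, mul_inv, mul_assoc, Finset.mul_sum]
  rfl

end DIET

/-- **Theorem 1, case C1.** If `(f, W, β)` globally minimizes the DIET objective among all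
continuous encoders with unit-normalized embeddings, all heads with unit-normalized rows and
all positive temperatures, then `f ∘ g` is the restriction of an orthogonal map `O`,
the rows of `W` recover the cluster vectors through the same `O`, `β = κ`, and rows
belonging to the same class coincide. -/
theorem diet_identifiability_C1
    {d D : ℕ} {Cset Idx : Type} [Fintype Cset] [Fintype Idx]
    (v : Cset → EuclideanSpace ℝ (Fin d))
    (hv_norm : ∀ c, ‖v c‖ = 1)
    (hv_gen : IsAffineGenerator v)
    (Cl : Idx → Cset) (hCl : Function.Surjective Cl)
    (κ : ℝ) (hκ : 0 < κ)
    (g : Metric.sphere (0 : EuclideanSpace ℝ (Fin d)) 1 → EuclideanSpace ℝ (Fin D))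
    (hg_cont : Continuous g) (hg_inj : Function.Injective g)
    (f : EuclideanSpace ℝ (Fin D) → EuclideanSpace ℝ (Fin d))
    (w : Idx → EuclideanSpace ℝ (Fin d)) (β : ℝ)
    (hf_cont : Continuous f)
    (hf_norm : ∀ z : Metric.sphere (0 : EuclideanSpace ℝ (Fin d)) 1, ‖f (g z)‖ = 1)
    (hw_norm : ∀ i, ‖w i‖ = 1)
    (hβ : 0 < β)
    (hmin : ∀ (f' : EuclideanSpace ℝ (Fin D) → EuclideanSpace ℝ (Fin d))
      (w' : Idx → EuclideanSpace ℝ (Fin d)) (β' : ℝ), Continuous f' →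
      (∀ z : Metric.sphere (0 : EuclideanSpace ℝ (Fin d)) 1, ‖f' (g z)‖ = 1) →
      (∀ i, ‖w' i‖ = 1) → 0 < β' →
      dietLoss d D v κ Cl g f w β ≤ dietLoss d D v κ Cl g f' w' β') :
    ∃ O : EuclideanSpace ℝ (Fin d) ≃ₗᵢ[ℝ] EuclideanSpace ℝ (Fin d),
      (∀ z : Metric.sphere (0 : EuclideanSpace ℝ (Fin d)) 1,
        f (g z) = O (z : EuclideanSpace ℝ (Fin d))) ∧
      (∀ i, w i = O (v (Cl i))) ∧
      β = κ ∧
      (∀ i j, Cl i = Cl j → w i = w j) := by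
  have : Nonempty Cset := hv_gen.nonempty
  have : Nonempty Idx := hCl.nonempty
  obtain ⟨f₀, hf₀⟩ := ContinuousMap.exists_extension' (hg_cont.isClosedEmbedding hg_inj)
    ⟨Subtype.val, continuous_subtype_val⟩
  have hf₀g : ∀ z, f₀ (g z) = z := congrFun hf₀
  obtain ⟨C, hC, hloss⟩ := exists_dietLoss_eq_integral v hv_norm κ Cl g
  have hle := hmin f₀ (fun i => v (Cl i)) κ f₀.continuous
    (fun z => by rw [hf₀g]; exact mem_sphere_zero_iff_norm.1 z.2) (fun i => hv_norm (Cl i)) hκ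
  rw [hloss f w β (hf_cont.comp hg_cont), hloss f₀ _ κ (f₀.continuous.comp hg_cont),
    mul_le_mul_iff_right₀ hC] at hle
  simp only [hf₀g] at hle
  have hsoftmax := softmax_eq_of_integral_expCrossEntropy_le (by fun_prop)
    (continuous_pi fun i => continuous_const.mul (continuous_const.inner
      (hf_cont.comp hg_cont))) hle
  choose c hc using fun z => exists_add_const_of_softmax_eq (hsoftmax z)
  obtain ⟨O, hO, hw, hβκ⟩ := (hv_gen.comp_surjective hCl).exists_linearIsometryEquiv_of_logit_eq
    (fun i => hv_norm (Cl i)) hw_norm hf_norm hκ hβ hc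
  exact ⟨O, hO, hw, hβκ, fun i j hij => by simp only [hw, Function.comp_apply, hij]⟩
end Sphere
end

section
/- (Injectivity from the optimality equation.) Let {v_c : c ∈ 𝒞set} ⊆ R^d be an affine generator system of R^d, let h: S^{d-1} → R^d be a map, and let {w̃_c : c ∈ 𝒞set} ⊆ R^d be vectors satisfying ⟨w̃_a − w̃_b, h(z)⟩ = ⟨v_a − v_b, z⟩ for all a, b ∈ 𝒞set and all z ∈ S^{d-1}. Then h is injective. -/
open scoped RealInnerProductSpace BigOperators

/-!
The differences `v a - v b` of an affine generator system span `ℝ^d`, so a vector orthogonal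
to all of them vanishes. The optimality equation with `h z₁ = h z₂` makes `z₁ - z₂` such a
vector.
-/

namespace IsAffineGenerator

variable {d : ℕ} {ι : Type} [Fintype ι] {v : ι → EuclideanSpace ℝ (Fin d)}

theorem nonempty_s9 (hv : IsAffineGenerator v) : Nonempty ι := by
  obtain ⟨α, hα, -⟩ := hv 0
  by_contra hempty
  simp [not_nonempty_iff.mp hempty] at hα

theorem eq_zero_of_inner_sub_eq_zero (hv : IsAffineGenerator v)
    {x : EuclideanSpace ℝ (Fin d)} (hx : ∀ a b, ⟪v a - v b, x⟫ = 0) : x = 0 := by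
  obtain ⟨b⟩ := hv.nonempty_s9
  obtain ⟨α, hα, hrep⟩ := hv (x + v b)
  have hconst : ∀ c, ⟪v c, x⟫ = ⟪v b, x⟫ := fun c =>
    sub_eq_zero.mp (by rw [← inner_sub_left]; exact hx c b)
  have hshift : ⟪x + v b, x⟫ = ⟪v b, x⟫ :=
    calc ⟪x + v b, x⟫ = ∑ c, α c * ⟪v c, x⟫ := by
          rw [hrep, sum_inner]; simp only [real_inner_smul_left]
      _ = ∑ c, α c * ⟪v b, x⟫ := by simp only [hconst]
      _ = ⟪v b, x⟫ := by rw [← Finset.sum_mul, hα, one_mul]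
  rw [inner_add_left, add_eq_right] at hshift
  exact inner_self_eq_zero.mp hshift

end IsAffineGenerator

/-- **Injectivity from the optimality equation.** If `{v c}` is an affine generator
system and `⟨w̃ a − w̃ b, h z⟩ = ⟨v a − v b, z⟩` for all `a, b` and all `z` on the unit
sphere, then `h` is injective. -/
theorem injective_of_optimality_equation
    {d : ℕ} {Cset : Type} [Fintype Cset]
    (v : Cset → EuclideanSpace ℝ (Fin d))
    (hv : IsAffineGenerator v)
    (h : Metric.sphere (0 : EuclideanSpace ℝ (Fin d)) 1 → EuclideanSpace ℝ (Fin d))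
    (w : Cset → EuclideanSpace ℝ (Fin d))
    (heq : ∀ a b : Cset, ∀ z : Metric.sphere (0 : EuclideanSpace ℝ (Fin d)) 1,
      ⟪w a - w b, h z⟫ = ⟪v a - v b, (z : EuclideanSpace ℝ (Fin d))⟫) :
    Function.Injective h := by
  intro z₁ z₂ hz
  refine Subtype.ext (sub_eq_zero.mp (hv.eq_zero_of_inner_sub_eq_zero fun a b => ?_))
  rw [inner_sub_right, ← heq, ← heq, hz, sub_self]
end

section
/- (Linearity from the optimality equation.) Let {v_c : c ∈ 𝒞set} ⊆ R^d be an affine generator system of R^d, let h: S^{d-1} → R^d be a continuous map, and let {w̃_c : c ∈ 𝒞set} ⊆ R^d be vectors satisfying ⟨w̃_a − w̃_b, h(z)⟩ = ⟨v_a − v_b, z⟩ for all a, b ∈ 𝒞set and all z ∈ S^{d-1}. Then there exists an invertible linear map A: R^d → R^d such that A(v_a − v_b) = w̃_a − w̃_b for all a, b ∈ 𝒞set and A^T h(z) = z for all z ∈ S^{d-1}; in particular, h is the restriction to S^{d-1} of the linear map (A^T)^{-1}. -/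
open scoped RealInnerProductSpace BigOperators

theorem span_range_sub_eq_top_of_affine_generating {R M ι : Type*} [Ring R] [Nontrivial R]
    [AddCommGroup M] [Module R M] [Fintype ι] {v : ι → M}
    (hv : ∀ x : M, ∃ α : ι → R, ∑ c, α c = 1 ∧ x = ∑ c, α c • v c) :
    Submodule.span R (Set.range fun p : ι × ι => v p.1 - v p.2) = ⊤ := by
  obtain ⟨b⟩ : Nonempty ι := by
    obtain ⟨α, hα, -⟩ := hv 0
    by_contra hι
    simp [not_nonempty_iff.mp hι] at hα
  refine Submodule.eq_top_iff'.mpr fun x => ?_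
  obtain ⟨α, hα, hx⟩ := hv (x + v b)
  have hx' : x = ∑ c, α c • (v c - v b) := by
    simp only [smul_sub, Finset.sum_sub_distrib, ← Finset.sum_smul, hα, one_smul, ← hx,
      add_sub_cancel_right]
  rw [hx']
  exact Submodule.sum_mem _ fun c _ =>
    Submodule.smul_mem _ _ (Submodule.subset_span ⟨(c, b), rfl⟩)

section LinearAlgebra

variable {K V F : Type*} [DivisionRing K] [AddCommGroup V] [Module K V] [FiniteDimensional K V]
  [AddCommGroup F] [Module K F] {Φ Ψ : V →ₗ[K] F}

theorem LinearMap.injective_of_injective_of_range_le (hΦ : Function.Injective Φ)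
    (hle : Φ.range ≤ Ψ.range) : Function.Injective Ψ := by
  have hrank : Module.finrank K V ≤ Module.finrank K Ψ.range :=
    (LinearMap.finrank_range_of_inj hΦ).symm.le.trans (Submodule.finrank_mono hle)
  have hker : Module.finrank K Ψ.ker = 0 := by
    have := Ψ.finrank_range_add_finrank_ker
    omega
  exact LinearMap.ker_eq_bot.mp (Submodule.finrank_eq_zero.mp hker)

theorem LinearMap.exists_linearEquiv_comp_eq (hΦ : Function.Injective Φ)
    (hle : Φ.range ≤ Ψ.range) : ∃ A : V ≃ₗ[K] V, ∀ x, Ψ (A x) = Φ x := by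
  have hΨ := LinearMap.injective_of_injective_of_range_le hΦ hle
  let A : V →ₗ[K] V :=
    (LinearEquiv.ofInjective Ψ hΨ).symm.toLinearMap ∘ₗ Submodule.inclusion hle ∘ₗ Φ.rangeRestrict
  have hA : ∀ x, Ψ (A x) = Φ x := fun x => LinearEquiv.ofInjective_symm_apply (h := hΨ) Ψ _
  refine ⟨LinearEquiv.ofInjectiveEndo A fun x y hxy => hΦ ?_, hA⟩
  rw [← hA x, ← hA y, hxy]

end LinearAlgebra

section InnerProduct

variable {E : Type*} [NormedAddCommGroup E] [InnerProductSpace ℝ E]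

noncomputable def innerPairing {S : Type*} (u : S → E) : E →ₗ[ℝ] S → ℝ :=
  LinearMap.pi fun s => (innerₗ E).flip (u s)

@[simp]
theorem innerPairing_apply {S : Type*} (u : S → E) (x : E) (s : S) :
    innerPairing u x s = ⟪x, u s⟫ :=
  rfl

theorem innerPairing_sphere_injective :
    Function.Injective (innerPairing (Subtype.val : Metric.sphere (0 : E) 1 → E)) := by
  refine (injective_iff_map_eq_zero _).mpr fun x hx => ?_
  by_contra hx0
  have hnx : ‖x‖ ≠ 0 := norm_ne_zero_iff.mpr hx0
  have hz : ‖x‖⁻¹ • x ∈ Metric.sphere (0 : E) 1 := by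
    rw [mem_sphere_zero_iff_norm, norm_smul, norm_inv, norm_norm, inv_mul_cancel₀ hnx]
  have := congrFun hx ⟨_, hz⟩
  rw [innerPairing_apply, real_inner_smul_right, real_inner_self_eq_norm_sq] at this
  simp [hnx] at this

end InnerProduct

theorem linear_of_optimality_equation_general
    {d : ℕ} {Cset : Type} [Fintype Cset]
    (v : Cset → EuclideanSpace ℝ (Fin d))
    (hv : IsAffineGenerator v)
    (h : Metric.sphere (0 : EuclideanSpace ℝ (Fin d)) 1 → EuclideanSpace ℝ (Fin d))
    (w : Cset → EuclideanSpace ℝ (Fin d))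
    (heq : ∀ a b : Cset, ∀ z : Metric.sphere (0 : EuclideanSpace ℝ (Fin d)) 1,
      ⟪w a - w b, h z⟫ = ⟪v a - v b, (z : EuclideanSpace ℝ (Fin d))⟫) :
    ∃ A : EuclideanSpace ℝ (Fin d) ≃ₗ[ℝ] EuclideanSpace ℝ (Fin d),
      (∀ a b : Cset, A (v a - v b) = w a - w b) ∧
      (∀ z : Metric.sphere (0 : EuclideanSpace ℝ (Fin d)) 1,
        LinearMap.adjoint (A.toLinearMap) (h z) = (z : EuclideanSpace ℝ (Fin d))) := by
  set Φ := innerPairing (Subtype.val : Metric.sphere (0 : EuclideanSpace ℝ (Fin d)) 1 → _)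
  set Ψ := innerPairing h
  have hΦ : Function.Injective Φ := innerPairing_sphere_injective
  have hΦΨ : ∀ a b, Φ (v a - v b) = Ψ (w a - w b) := fun a b => funext fun z => (heq a b z).symm
  have hle : Φ.range ≤ Ψ.range := by
    rw [LinearMap.range_eq_map, ← span_range_sub_eq_top_of_affine_generating hv,
      Submodule.map_span, Submodule.span_le]
    rintro _ ⟨_, ⟨⟨a, b⟩, rfl⟩, rfl⟩
    exact ⟨w a - w b, (hΦΨ a b).symm⟩
  have hΨ : Function.Injective Ψ := LinearMap.injective_of_injective_of_range_le hΦ hle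
  obtain ⟨A, hA⟩ := LinearMap.exists_linearEquiv_comp_eq hΦ hle
  refine ⟨A, fun a b => hΨ ?_, fun z => ext_inner_left ℝ fun x => ?_⟩
  · rw [hA, hΦΨ]
  · rw [LinearMap.adjoint_inner_right]
    exact congrFun (hA x) z

/-- **Linearity from the optimality equation.** If `{v c}` is an affine generator system,
`h` is continuous on the unit sphere, and `⟨w̃ a − w̃ b, h z⟩ = ⟨v a − v b, z⟩` for all
`a, b` and all `z` on the sphere, then there is an invertible linear map `A` with
`A (v a − v b) = w̃ a − w̃ b` and `Aᵀ (h z) = z`; in particular `h` is the restriction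
of the linear map `(Aᵀ)⁻¹` to the sphere. -/
theorem linear_of_optimality_equation
    {d : ℕ} {Cset : Type} [Fintype Cset]
    (v : Cset → EuclideanSpace ℝ (Fin d))
    (hv : IsAffineGenerator v)
    (h : Metric.sphere (0 : EuclideanSpace ℝ (Fin d)) 1 → EuclideanSpace ℝ (Fin d))
    (hcont : Continuous h)
    (w : Cset → EuclideanSpace ℝ (Fin d))
    (heq : ∀ a b : Cset, ∀ z : Metric.sphere (0 : EuclideanSpace ℝ (Fin d)) 1,
      ⟪w a - w b, h z⟫ = ⟪v a - v b, (z : EuclideanSpace ℝ (Fin d))⟫) :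
    ∃ A : EuclideanSpace ℝ (Fin d) ≃ₗ[ℝ] EuclideanSpace ℝ (Fin d),
      (∀ a b : Cset, A (v a - v b) = w a - w b) ∧
      (∀ z : Metric.sphere (0 : EuclideanSpace ℝ (Fin d)) 1,
        LinearMap.adjoint (A.toLinearMap) (h z) = (z : EuclideanSpace ℝ (Fin d))) :=
  linear_of_optimality_equation_general v hv h w heq
end

section
/- (Orthogonality in the unit-normalized case.) Let {v_c : c ∈ 𝒞set} ⊆ R^d be an affine generator system of R^d, let h: S^{d-1} → S^{d-1} be a continuous map taking values in the unit sphere, and let {w̃_c : c ∈ 𝒞set} ⊆ R^d satisfy ⟨w̃_a − w̃_b, h(z)⟩ = ⟨v_a − v_b, z⟩ for all a, b ∈ 𝒞set and all z ∈ S^{d-1}. Then there exists an orthogonal linear map A of R^d such that h(z) = A z for all z ∈ S^{d-1} and w̃_a − w̃_b = A(v_a − v_b) for all a, b ∈ 𝒞set. -/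
/-! Collect the differences into the linear maps `Lw y = (⟪w a - w b, y⟫)_(a,b)` and
`Lv y = (⟪v a - v b, y⟫)_(a,b)`; the hypothesis says `Lw ∘ h = Lv` on the sphere, so by scaling
`range Lv ≤ range Lw`. Since the `v a - v b` span `ℝ^d`, `Lv` is injective, hence `Lw` has rank
`d` and is injective too. Therefore `h` is the restriction of a linear map `A` with `Lw ∘ A = Lv`;
`A` maps the unit sphere into itself and so is orthogonal, and `Lw ∘ A = Lv` read against
`⟪A (v a - v b), A x⟫ = ⟪v a - v b, x⟫` gives `w a - w b = A (v a - v b)`. -/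

open scoped RealInnerProductSpace BigOperators

open Function LinearMap Module

theorem LinearMap.injective_of_range_le_of_injective {K V W : Type*} [Field K] [AddCommGroup V]
    [Module K V] [FiniteDimensional K V] [AddCommGroup W] [Module K W] {L M : V →ₗ[K] W}
    (hM : Injective M) (hle : range M ≤ range L) : Injective L := by
  have hrank : finrank K V ≤ finrank K (range L) :=
    (finrank_range_of_inj hM).symm.le.trans (Submodule.finrank_mono hle)
  have hker : finrank K (ker L) = 0 := by
    have := finrank_range_add_finrank_ker L
    omega
  exact ker_eq_bot.mp (Submodule.finrank_eq_zero.mp hker)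

theorem LinearMap.exists_comp_eq_of_range_le {R P M N : Type*} [Ring R] [AddCommGroup P]
    [Module R P] [Projective R P] [AddCommGroup M] [Module R M] [AddCommGroup N] [Module R N]
    {L : M →ₗ[R] N} {F : P →ₗ[R] N} (hle : range F ≤ range L) : ∃ A : P →ₗ[R] M, L ∘ₗ A = F := by
  obtain ⟨A, hA⟩ := projective_lifting_property L.rangeRestrict
    (F.codRestrict _ fun x => hle ⟨x, rfl⟩) L.surjective_rangeRestrict
  exact ⟨A, by ext x; exact congrArg Subtype.val (LinearMap.congr_fun hA x)⟩

section Sphere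

variable {E F : Type*} [NormedAddCommGroup E] [NormedSpace ℝ E] [NormedAddCommGroup F]
  [NormedSpace ℝ F]

theorem LinearMap.range_le_of_forall_norm_eq_one {f : E →ₗ[ℝ] F} {p : Submodule ℝ F}
    (hf : ∀ z, ‖z‖ = 1 → f z ∈ p) : range f ≤ p := by
  rintro _ ⟨x, rfl⟩
  rcases eq_or_ne x 0 with rfl | hx
  · simp
  · rw [← smul_inv_smul₀ (norm_ne_zero_iff.mpr hx) x, map_smul]
    exact p.smul_mem _ (hf _ (norm_smul_inv_norm hx))

theorem LinearMap.norm_map_of_forall_norm_eq_one {f : E →ₗ[ℝ] F}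
    (hf : ∀ z, ‖z‖ = 1 → ‖f z‖ = 1) (x : E) : ‖f x‖ = ‖x‖ := by
  rcases eq_or_ne x 0 with rfl | hx
  · simp
  · have hu : ‖‖x‖⁻¹ • x‖ = 1 := norm_smul_inv_norm hx
    rw [← smul_inv_smul₀ (norm_ne_zero_iff.mpr hx) x, map_smul, norm_smul, norm_smul, hf _ hu, hu]

end Sphere

section InnerProduct

variable {ι E F : Type*} [NormedAddCommGroup E] [InnerProductSpace ℝ E] [NormedAddCommGroup F]
  [InnerProductSpace ℝ F]

theorem injective_pi_innerₗ_sub_of_vectorSpan_eq_top {v : ι → E}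
    (hv : vectorSpan ℝ (Set.range v) = ⊤) :
    Injective (LinearMap.pi fun p : ι × ι => innerₗ _ (v p.1 - v p.2)) := by
  rw [← ker_eq_bot, eq_bot_iff]
  intro y hy
  have hspan : vectorSpan ℝ (Set.range v) ≤ ker (innerₗ E y) := by
    rw [vectorSpan_def, Submodule.span_le]
    rintro _ ⟨_, ⟨a, rfl⟩, _, ⟨b, rfl⟩, rfl⟩
    simpa [real_inner_comm, inner_sub_left, inner_sub_right] using congrFun (mem_ker.mp hy) (a, b)
  simpa using hspan (hv ▸ Submodule.mem_top : y ∈ vectorSpan ℝ (Set.range v))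

theorem LinearIsometryEquiv.eq_apply_of_forall_inner_apply (A : E ≃ₗᵢ[ℝ] F) {u : F} {v : E}
    (h : ∀ x, ⟪u, A x⟫ = ⟪v, x⟫) : u = A v :=
  ext_inner_right ℝ fun y => by rw [← A.apply_symm_apply y, h, A.inner_map_map]

end InnerProduct

theorem IsAffineGenerator.vectorSpan_eq_top {d : ℕ} {ι : Type} [Fintype ι]
    {v : ι → EuclideanSpace ℝ (Fin d)} (hv : IsAffineGenerator v) :
    vectorSpan ℝ (Set.range v) = ⊤ := by
  refine AffineSubspace.vectorSpan_eq_top_of_affineSpan_eq_top ℝ _ _ (eq_top_iff.mpr fun x _ => ?_)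
  obtain ⟨α, hα, rfl⟩ := hv x
  rw [← Finset.univ.affineCombination_eq_linear_combination v α hα]
  exact affineCombination_mem_affineSpan hα v

theorem orthogonal_of_optimality_equation_general
    {d : ℕ} {Cset : Type} [Fintype Cset]
    (v : Cset → EuclideanSpace ℝ (Fin d))
    (hv : IsAffineGenerator v)
    (h : Metric.sphere (0 : EuclideanSpace ℝ (Fin d)) 1 → EuclideanSpace ℝ (Fin d))
    (hnorm : ∀ z, ‖h z‖ = 1)
    (w : Cset → EuclideanSpace ℝ (Fin d))
    (heq : ∀ a b : Cset, ∀ z : Metric.sphere (0 : EuclideanSpace ℝ (Fin d)) 1,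
      ⟪w a - w b, h z⟫ = ⟪v a - v b, (z : EuclideanSpace ℝ (Fin d))⟫) :
    ∃ A : EuclideanSpace ℝ (Fin d) ≃ₗᵢ[ℝ] EuclideanSpace ℝ (Fin d),
      (∀ z : Metric.sphere (0 : EuclideanSpace ℝ (Fin d)) 1,
        h z = A (z : EuclideanSpace ℝ (Fin d))) ∧
      (∀ a b : Cset, w a - w b = A (v a - v b)) := by
  let Lw := LinearMap.pi fun p : Cset × Cset => innerₗ _ (w p.1 - w p.2)
  let Lv := LinearMap.pi fun p : Cset × Cset => innerₗ _ (v p.1 - v p.2)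
  have hLwh (z : Metric.sphere (0 : EuclideanSpace ℝ (Fin d)) 1) : Lw (h z) = Lv z :=
    funext fun p => heq p.1 p.2 z
  have hLv : Injective Lv := injective_pi_innerₗ_sub_of_vectorSpan_eq_top hv.vectorSpan_eq_top
  have hle : range Lv ≤ range Lw := range_le_of_forall_norm_eq_one fun z hz =>
    ⟨h ⟨z, mem_sphere_zero_iff_norm.mpr hz⟩, hLwh _⟩
  have hLw : Injective Lw := injective_of_range_le_of_injective hLv hle
  obtain ⟨A₀, hA₀⟩ := exists_comp_eq_of_range_le hle
  have hhA₀ (z : Metric.sphere (0 : EuclideanSpace ℝ (Fin d)) 1) : h z = A₀ z :=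
    hLw (by rw [hLwh, ← hA₀, LinearMap.comp_apply])
  have hA₀_norm : ∀ x, ‖A₀ x‖ = ‖x‖ := norm_map_of_forall_norm_eq_one fun z hz => by
    rw [← hhA₀ ⟨z, mem_sphere_zero_iff_norm.mpr hz⟩, hnorm]
  let A := LinearIsometry.toLinearIsometryEquiv ⟨A₀, hA₀_norm⟩ rfl
  refine ⟨A, hhA₀, fun a b => A.eq_apply_of_forall_inner_apply fun x => ?_⟩
  exact congrFun (LinearMap.congr_fun hA₀ x) (a, b)

/-- **Orthogonality in the unit-normalized case.** If `{v c}` is an affine generator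
system, `h` is a continuous map of the unit sphere taking values in the unit sphere, and
`⟨w̃ a − w̃ b, h z⟩ = ⟨v a − v b, z⟩` for all `a, b` and all `z` on the sphere, then there
is an orthogonal linear map `A` with `h z = A z` and `w̃ a − w̃ b = A (v a − v b)`. -/
theorem orthogonal_of_optimality_equation
    {d : ℕ} {Cset : Type} [Fintype Cset]
    (v : Cset → EuclideanSpace ℝ (Fin d))
    (hv : IsAffineGenerator v)
    (h : Metric.sphere (0 : EuclideanSpace ℝ (Fin d)) 1 → EuclideanSpace ℝ (Fin d))
    (hcont : Continuous h)
    (hnorm : ∀ z, ‖h z‖ = 1)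
    (w : Cset → EuclideanSpace ℝ (Fin d))
    (heq : ∀ a b : Cset, ∀ z : Metric.sphere (0 : EuclideanSpace ℝ (Fin d)) 1,
      ⟪w a - w b, h z⟫ = ⟪v a - v b, (z : EuclideanSpace ℝ (Fin d))⟫) :
    ∃ A : EuclideanSpace ℝ (Fin d) ≃ₗᵢ[ℝ] EuclideanSpace ℝ (Fin d),
      (∀ z : Metric.sphere (0 : EuclideanSpace ℝ (Fin d)) 1,
        h z = A (z : EuclideanSpace ℝ (Fin d))) ∧
      (∀ a b : Cset, w a - w b = A (v a - v b)) :=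
  orthogonal_of_optimality_equation_general v hv h hnorm w heq
end

section
/- (Rigidity under the diversity assumption.) Let {v_c : c ∈ 𝒞set} ⊆ S^{d-1} be a finite system of unit vectors that is diverse. Let Σ = diag(σ_1, …, σ_d) be a diagonal matrix with all σ_i > 0 and let ψ ∈ R^d be such that ‖Σ v_c + ψ‖ = 1 for all c ∈ 𝒞set. Then ψ = 0 and Σ is the identity matrix, i.e., σ_i = 1 for all i. -/
/-!
Expanding `‖Σ v + ψ‖² = 1` and using `∑ₖ vₖ² = 1` to homogenise the constant terms gives, for
every `c`, the relation `∑ₖ (σₖ² - 1 + ‖ψ‖²) vₖ² + ∑ₖ 2 σₖ ψₖ vₖ = 0`. Diversity says exactly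
that such a relation, holding for all `c`, has vanishing coefficients: so `σₖ ψₖ = 0`, whence
`ψ = 0` as `σₖ > 0`, and then `σₖ² = 1`.
-/

/-- The system `{v c}` of unit vectors is *diverse* if the `|ι| × 2d` matrix whose row
indexed by `c` is `((v c ⊙ v c)ᵀ, (v c)ᵀ)` (with `⊙` the elementwise product) has full
column rank `2d`, i.e. its columns are linearly independent. -/
def IsDiverse {d : ℕ} {ι : Type} (v : ι → EuclideanSpace ℝ (Fin d)) : Prop :=
  LinearIndependent ℝ
    (fun j : Fin d ⊕ Fin d => fun c : ι =>
      Sum.elim (fun k => v c k * v c k) (fun k => v c k) j)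

open Finset

theorem IsDiverse.eq_zero_of_forall_sum_eq_zero {d : ℕ} {ι : Type}
    {v : ι → EuclideanSpace ℝ (Fin d)} (hv : IsDiverse v) {a b : Fin d → ℝ}
    (h : ∀ c, ∑ k, a k * (v c k * v c k) + ∑ k, b k * v c k = 0) :
    a = 0 ∧ b = 0 := by
  have hab := Fintype.linearIndependent_iff.mp hv (Sum.elim a b) <| by
    funext c
    simpa [Fintype.sum_sum_type] using h c
  exact ⟨funext fun k => hab (.inl k), funext fun k => hab (.inr k)⟩

theorem EuclideanSpace.sum_sq_eq_one_of_norm_eq_one {ι : Type*} [Fintype ι]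
    {x : EuclideanSpace ℝ ι} (hx : ‖x‖ = 1) : ∑ k, x k ^ 2 = 1 := by
  rw [← EuclideanSpace.real_norm_sq_eq, hx, one_pow]

theorem sum_quadratic_relation_of_sum_sq_eq_one {ι : Type*} [Fintype ι] {x σ ψ : ι → ℝ}
    (hx : ∑ k, x k ^ 2 = 1) (hy : ∑ k, (σ k * x k + ψ k) ^ 2 = 1) :
    ∑ k, (σ k ^ 2 - 1 + ∑ j, ψ j ^ 2) * (x k * x k) + ∑ k, 2 * σ k * ψ k * x k = 0 := by
  set P := ∑ j, ψ j ^ 2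
  calc ∑ k, (σ k ^ 2 - 1 + P) * (x k * x k) + ∑ k, 2 * σ k * ψ k * x k
      = ∑ k, (σ k * x k + ψ k) ^ 2 - P - ∑ k, x k ^ 2 + P * ∑ k, x k ^ 2 := by
        simp only [P, mul_sum, ← sum_add_distrib, ← sum_sub_distrib]
        exact sum_congr rfl fun k _ => by ring
    _ = 0 := by rw [hx, hy]; ring

theorem rigidity_of_diverse_general
    {d : ℕ} {Cset : Type}
    (v : Cset → EuclideanSpace ℝ (Fin d))
    (hv_norm : ∀ c, ‖v c‖ = 1)
    (hv_div : IsDiverse v)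
    (σ : Fin d → ℝ) (hσ : ∀ i, 0 < σ i)
    (ψ : EuclideanSpace ℝ (Fin d))
    (hsphere : ∀ c,
      ‖((WithLp.equiv 2 (Fin d → ℝ)).symm fun i => σ i * v c i) + ψ‖ = 1) :
    ψ = 0 ∧ ∀ i, σ i = 1 := by
  obtain ⟨hquad, hlin⟩ := hv_div.eq_zero_of_forall_sum_eq_zero fun c =>
    sum_quadratic_relation_of_sum_sq_eq_one
      (EuclideanSpace.sum_sq_eq_one_of_norm_eq_one (hv_norm c))
      (by simpa using EuclideanSpace.sum_sq_eq_one_of_norm_eq_one (hsphere c))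
  have hψ : ∀ k, ψ k = 0 := fun k => by
    simpa [(hσ k).ne'] using congrFun hlin k
  refine ⟨by ext k; exact hψ k, fun i => ?_⟩
  have hσsq : σ i ^ 2 = 1 := by simpa [hψ, sub_eq_zero] using congrFun hquad i
  exact (pow_eq_one_iff_of_nonneg (hσ i).le two_ne_zero).mp hσsq

/-- **Rigidity under the diversity assumption.** If `{v c}` is a diverse system of unit
vectors, `Σ = diag (σ₁, …, σ_d)` has positive diagonal entries, `ψ ∈ ℝ^d`, and
`‖Σ v c + ψ‖ = 1` for every `c`, then `ψ = 0` and `Σ` is the identity. -/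
theorem rigidity_of_diverse
    {d : ℕ} {Cset : Type} [Fintype Cset]
    (v : Cset → EuclideanSpace ℝ (Fin d))
    (hv_norm : ∀ c, ‖v c‖ = 1)
    (hv_div : IsDiverse v)
    (σ : Fin d → ℝ) (hσ : ∀ i, 0 < σ i)
    (ψ : EuclideanSpace ℝ (Fin d))
    (hsphere : ∀ c,
      ‖((WithLp.equiv 2 (Fin d → ℝ)).symm fun i => σ i * v c i) + ψ‖ = 1) :
    ψ = 0 ∧ ∀ i, σ i = 1 :=
  rigidity_of_diverse_general v hv_norm hv_div σ hσ ψ hsphere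
end
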